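/- For 0<|q|<1 and nonzero x: j(x;q) j(-x^3;q^6) = J_{3,15}[ q^3 x^{-2} j(-q^{-3} x^5; q^{10}) - x j(-q^3 x^5; q^{10}) ] + J_{6,15}[ j(-q x^5; q^{10}) - q x^{-1} j(-q^{-1} x^5; q^{10}) ], where j(x;q) := (x;q)_∞(q/x;q)_∞(q;q)_∞ and J_{a,m} := j(q^a;q^m). -/

import Mathlib

noncomputable def qPochInf (x q : ℂ) : ℂ := ∏' i : ℕ, (1 - q ^ i * x)

noncomputable def jt (x q : ℂ) : ℂ := qPochInf x q * qPochInf (q / x) q * qPochInf q q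

noncomputable def appellLerch (x q z : ℂ) : ℂ :=
  (jt z q)⁻¹ * ∑' r : ℤ, (-1) ^ r * q ^ (r * (r - 1) / 2) * z ^ r / (1 - q ^ (r - 1) * x * z)

noncomputable def qPochFin (x q : ℂ) (n : ℕ) : ℂ := ∏ i ∈ Finset.range n, (1 - q ^ i * x)


/-!
By the Jacobi triple product (`jt_eq_theta`), `jt x q = ∑ₙ (-1)ⁿ q^(n(n-1)/2) xⁿ`; it is the limit
`N → ∞` of the finite identity obtained from Cauchy's `q`-binomial theorem with `2N` factors, and
dominated convergence applies because the Gaussian-binomial weights stay bounded and tend to `1`.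
The left side thus becomes a double series over `(m, n) ∈ ℤ²` whose `x`-exponent is `m + 3n`.
Writing `m + 3n = 5r + c` with `c ∈ {-2, …, 2}` and `n = s + r`, each term factors as a monomial
times a term of `θ(q^(6-3c); q¹⁵)` times a term of `θ(-q^(1+2c) x⁵; q¹⁰)`. The class `c = 2`
vanishes since `θ(1; q) = 0`, and `J_{12,15} = J_{3,15}`, `J_{9,15} = J_{6,15}` turn the other
four classes into the right side.
-/

open Filter Finset Topology

def choose2 (n : ℤ) : ℤ := n * (n - 1) / 2

theorem two_mul_choose2 (n : ℤ) : 2 * choose2 n = n * (n - 1) :=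
  Int.two_mul_ediv_two_of_even n.even_mul_pred_self

theorem choose2_natCast (n : ℕ) : choose2 n = n.choose 2 := by
  have h : (2 : ℚ) * (n.choose 2 : ℕ) = n * (n - 1) := by rw [Nat.cast_choose_two]; ring
  have h' : 2 * ((n.choose 2 : ℕ) : ℤ) = n * (n - 1) := by exact_mod_cast h
  linarith [two_mul_choose2 n]

theorem choose2_neg (n : ℤ) : choose2 (-n) = choose2 n + n := by
  linarith [two_mul_choose2 n, two_mul_choose2 (-n)]

theorem choose2_one_sub (n : ℤ) : choose2 (1 - n) = choose2 n := by
  linarith [two_mul_choose2 n, two_mul_choose2 (1 - n)]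

theorem summable_pow_choose_two_mul_pow {ρ c : ℝ} (hρ0 : 0 < ρ) (hρ1 : ρ < 1) (hc : 0 < c) :
    Summable fun n : ℕ => ρ ^ n.choose 2 * c ^ n := by
  refine summable_of_ratio_test_tendsto_lt_one zero_lt_one
    (Eventually.of_forall fun n => by positivity) ?_
  have hratio : ∀ n : ℕ, ‖ρ ^ (n + 1).choose 2 * c ^ (n + 1)‖ / ‖ρ ^ n.choose 2 * c ^ n‖
      = ρ ^ n * c := by
    intro n
    rw [Nat.choose_succ_succ', Nat.choose_one_right, Real.norm_of_nonneg (by positivity),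
      Real.norm_of_nonneg (by positivity)]
    field_simp
    ring
  simpa only [hratio, zero_mul] using
    (tendsto_pow_atTop_nhds_zero_of_lt_one hρ0.le hρ1).mul_const c

theorem summable_zpow_choose2_mul_zpow {ρ c : ℝ} (hρ0 : 0 < ρ) (hρ1 : ρ < 1) (hc : 0 < c) :
    Summable fun n : ℤ => ρ ^ choose2 n * c ^ n := by
  refine Summable.of_nat_of_neg ?_ ?_
  · simpa [choose2_natCast] using summable_pow_choose_two_mul_pow hρ0 hρ1 hc
  · refine (summable_pow_choose_two_mul_pow hρ0 hρ1 (div_pos hρ0 hc)).congr fun n => ?_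
    rw [choose2_neg, choose2_natCast, zpow_add₀ hρ0.ne', zpow_neg, div_pow]
    simp only [zpow_natCast]
    field_simp

theorem norm_pow_lt_one {𝕜 : Type*} [NormedDivisionRing 𝕜] {q : 𝕜} (hq : ‖q‖ < 1) {n : ℕ}
    (hn : n ≠ 0) : ‖q ^ n‖ < 1 := by
  rw [norm_pow]; exact pow_lt_one₀ (norm_nonneg q) hq hn

noncomputable def thetaTerm (x q : ℂ) (n : ℤ) : ℂ := (-1) ^ n * q ^ choose2 n * x ^ n

noncomputable def theta (x q : ℂ) : ℂ := ∑' n : ℤ, thetaTerm x q n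

theorem summable_norm_thetaTerm {x q : ℂ} (hq0 : q ≠ 0) (hq1 : ‖q‖ < 1) (hx : x ≠ 0) :
    Summable fun n => ‖thetaTerm x q n‖ := by
  simpa [thetaTerm] using
    summable_zpow_choose2_mul_zpow (norm_pos_iff.2 hq0) hq1 (norm_pos_iff.2 hx)

theorem neg_one_zpow_one_sub {α : Type*} [DivisionRing α] (n : ℤ) :
    (-1 : α) ^ (1 - n) = -(-1) ^ n := by
  rw [zpow_sub₀ (neg_ne_zero.2 one_ne_zero), zpow_one, div_eq_mul_inv, ← inv_zpow, inv_neg, inv_one,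
    neg_one_mul]

theorem theta_one (q : ℂ) : theta 1 q = 0 := by
  have h : theta 1 q = -theta 1 q := by
    rw [theta, ← tsum_neg, ← (Equiv.subLeft (1 : ℤ)).tsum_eq]
    congr 1 with n
    simp [thetaTerm, choose2_one_sub, neg_one_zpow_one_sub]
  linear_combination h / 2

theorem qPochFin_zero (x q : ℂ) : qPochFin x q 0 = 1 := prod_range_zero _

theorem qPochFin_succ (x q : ℂ) (n : ℕ) :
    qPochFin x q (n + 1) = qPochFin x q n * (1 - q ^ n * x) :=
  prod_range_succ _ n

theorem qPochFin_succ' (x q : ℂ) (n : ℕ) :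
    qPochFin x q (n + 1) = (1 - x) * qPochFin (q * x) q n := by
  rw [qPochFin, prod_range_succ', qPochFin, mul_comm]
  simp only [pow_zero, one_mul, pow_succ, mul_assoc]

theorem qPochFin_add (x q : ℂ) (m n : ℕ) :
    qPochFin x q (m + n) = qPochFin x q m * qPochFin (q ^ m * x) q n := by
  rw [qPochFin, prod_range_add, qPochFin, qPochFin]
  simp only [pow_add, mul_assoc, mul_left_comm (q ^ m)]

/-- `(q;q)_{a+b}` times the Gaussian binomial coefficient `[a+b, a]_q`. -/
noncomputable def scaledQBinom (q : ℂ) (a b : ℕ) : ℂ :=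
  qPochFin (q ^ (a + 1)) q b * qPochFin (q ^ (b + 1)) q a

theorem scaledQBinom_comm (q : ℂ) (a b : ℕ) : scaledQBinom q a b = scaledQBinom q b a :=
  mul_comm _ _

theorem scaledQBinom_zero_succ (q : ℂ) (b : ℕ) :
    scaledQBinom q 0 (b + 1) = (1 - q ^ (b + 1)) * scaledQBinom q 0 b := by
  simp only [scaledQBinom, qPochFin_zero, qPochFin_succ]
  ring

theorem scaledQBinom_succ_succ (q : ℂ) (a b : ℕ) :
    scaledQBinom q (a + 1) (b + 1) =
      (1 - q ^ (a + b + 2)) *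
        (scaledQBinom q a (b + 1) + q ^ (a + 1) * scaledQBinom q (a + 1) b) := by
  rw [scaledQBinom, scaledQBinom, scaledQBinom, qPochFin_succ' (q ^ (a + 1)),
    qPochFin_succ' (q ^ (b + 1)), ← pow_succ', ← pow_succ', qPochFin_succ _ _ b,
    qPochFin_succ _ _ a]
  ring

theorem Finset.Nat.sum_antidiagonal_succ_of_pascal {M : Type*} [AddCommMonoid M]
    {f g h : ℕ → ℕ → M} (hf₀ : ∀ b, f 0 (b + 1) = h 0 b) (hf₁ : ∀ a, f (a + 1) 0 = g a 0)
    (hf : ∀ a b, f (a + 1) (b + 1) = g a (b + 1) + h (a + 1) b) (n : ℕ) :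
    ∑ p ∈ antidiagonal (n + 1), f p.1 p.2 =
      ∑ p ∈ antidiagonal n, g p.1 p.2 + ∑ p ∈ antidiagonal n, h p.1 p.2 := by
  rcases n with _ | m
  · rw [Nat.sum_antidiagonal_succ]
    simp [hf₀, hf₁, add_comm]
  · rw [Nat.sum_antidiagonal_succ, Nat.sum_antidiagonal_succ', Nat.sum_antidiagonal_succ',
      Nat.sum_antidiagonal_succ]
    simp only [hf₀, hf₁, hf, sum_add_distrib]
    abel

theorem qPochFin_self_mul_qPochFin_eq_sum (q t : ℂ) (n : ℕ) :
    qPochFin q q n * qPochFin t q n =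
      ∑ p ∈ antidiagonal n,
        (-1) ^ p.1 * q ^ p.1.choose 2 * scaledQBinom q p.1 p.2 * t ^ p.1 := by
  induction n generalizing t with
  | zero => simp [qPochFin_zero, scaledQBinom]
  | succ n ih =>
    set F : ℕ → ℂ := fun a => (-1) ^ a * q ^ a.choose 2 * t ^ a
    have hF : ∀ a, F (a + 1) + q ^ a * F a =
        (1 - t) * ((-1) ^ a * q ^ a.choose 2 * (q * t) ^ a) := by
      intro a
      simp only [F, Nat.choose_succ_succ', Nat.choose_one_right]
      ring
    calc qPochFin q q (n + 1) * qPochFin t q (n + 1)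
        = (1 - q ^ (n + 1)) * ((1 - t) * (qPochFin q q n * qPochFin (q * t) q n)) := by
          rw [qPochFin_succ, qPochFin_succ']; ring
      _ = ∑ p ∈ antidiagonal n, (1 - q ^ (p.1 + p.2 + 1)) * F (p.1 + 1) * scaledQBinom q p.1 p.2 +
            ∑ p ∈ antidiagonal n,
              (1 - q ^ (p.1 + p.2 + 1)) * F p.1 * q ^ p.1 * scaledQBinom q p.1 p.2 := by
          rw [ih, mul_sum, mul_sum, ← sum_add_distrib]
          refine sum_congr rfl fun p hp => ?_
          rw [mem_antidiagonal.1 hp]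
          linear_combination -(1 - q ^ (n + 1)) * scaledQBinom q p.1 p.2 * hF p.1
      _ = ∑ p ∈ antidiagonal (n + 1), F p.1 * scaledQBinom q p.1 p.2 := by
          refine (Nat.sum_antidiagonal_succ_of_pascal (f := fun a b => F a * scaledQBinom q a b)
            (g := fun a b => (1 - q ^ (a + b + 1)) * F (a + 1) * scaledQBinom q a b)
            (h := fun a b => (1 - q ^ (a + b + 1)) * F a * q ^ a * scaledQBinom q a b)
            (fun b => ?_) (fun a => ?_) (fun a b => ?_) n).symm
          · rw [scaledQBinom_zero_succ]; ring
          · rw [scaledQBinom_comm, scaledQBinom_zero_succ, scaledQBinom_comm]; ring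
          · rw [scaledQBinom_succ_succ]; ring
      _ = _ := sum_congr rfl fun p _ => by simp only [F]; ring

theorem qPochFin_zpow_neg_mul {q x : ℂ} (hq : q ≠ 0) (hx : x ≠ 0) (N : ℕ) :
    q ^ choose2 (N + 1) * qPochFin (q ^ (-(N : ℤ)) * x) q N =
      (-x) ^ N * qPochFin (q / x) q N := by
  induction N with
  | zero => simp [qPochFin_zero, choose2]
  | succ N ih =>
    have hc : choose2 ((N + 1 : ℕ) + 1) = choose2 (N + 1) + (N + 1 : ℕ) := by
      push_cast; linarith [two_mul_choose2 (N + 1), two_mul_choose2 (N + 1 + 1)]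
    have hshift : q * (q ^ (-((N + 1 : ℕ) : ℤ)) * x) = q ^ (-(N : ℤ)) * x := by
      rw [← mul_assoc, ← zpow_one_add₀ hq]; push_cast; ring_nf
    rw [qPochFin_succ', hshift, hc, zpow_add₀ hq, zpow_natCast, qPochFin_succ, zpow_neg,
      zpow_natCast]
    have hq' : q ^ (N + 1) * (q ^ (N + 1))⁻¹ = 1 := mul_inv_cancel₀ (pow_ne_zero _ hq)
    have hx' : x * x⁻¹ = 1 := mul_inv_cancel₀ hx
    linear_combination (q ^ (N + 1) - x * (q ^ (N + 1) * (q ^ (N + 1))⁻¹)) * ih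
      - x * (-x) ^ N * qPochFin (q / x) q N * hq'
      - q ^ (N + 1) * (-x) ^ N * qPochFin (q / x) q N * hx'

noncomputable def truncWeight (q : ℂ) (N : ℕ) (j : ℤ) : ℂ :=
  if j.natAbs ≤ N then scaledQBinom q (N + j).toNat (N - j).toNat else 0

theorem sum_antidiagonal_eq_tsum_truncWeight (x q : ℂ) (N : ℕ) :
    ∑ p ∈ antidiagonal (N + N), thetaTerm x q (p.1 - N) * scaledQBinom q p.1 p.2 =
      ∑' j, thetaTerm x q j * truncWeight q N j := by
  rw [tsum_eq_sum (s := Icc (-(N : ℤ)) N) fun j hj => by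
    rw [truncWeight, if_neg (by rw [mem_Icc] at hj; omega), mul_zero]]
  refine sum_nbij' (fun p => p.1 - N) (fun j => ((N + j).toNat, (N - j).toNat))
    (fun p hp => ?_) (fun j hj => ?_) (fun p hp => ?_) (fun j hj => ?_) (fun p hp => ?_)
  · simp only [HasAntidiagonal.mem_antidiagonal, mem_Icc] at hp ⊢; omega
  · simp only [HasAntidiagonal.mem_antidiagonal, mem_Icc] at hj ⊢; omega
  · simp only [HasAntidiagonal.mem_antidiagonal] at hp; ext <;> simp; omega
  · simp only [mem_Icc] at hj; omega
  · simp only [HasAntidiagonal.mem_antidiagonal] at hp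
    rw [truncWeight, if_pos (by omega)]
    congr 3 <;> omega

theorem neg_pow_mul_thetaTerm_sub_natCast {x q : ℂ} (hq : q ≠ 0) (hx : x ≠ 0) (N a : ℕ) :
    (-x) ^ N * thetaTerm x q (a - N) =
      q ^ choose2 (N + 1) * ((-1) ^ a * q ^ a.choose 2 * (q ^ (-(N : ℤ)) * x) ^ a) := by
  have hc : choose2 ((a : ℤ) - N) = choose2 (N + 1) + (a.choose 2 : ℕ) - (N * a : ℕ) := by
    rw [← choose2_natCast]; push_cast
    linarith [two_mul_choose2 (a - N), two_mul_choose2 (N + 1), two_mul_choose2 a]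
  rw [thetaTerm, hc, zpow_sub₀ hq, zpow_add₀ hq, zpow_sub₀ (by norm_num), zpow_sub₀ hx]
  simp only [zpow_natCast, zpow_neg, mul_pow, inv_pow, ← pow_mul]
  field_simp
  ring

theorem qPochFin_mul_qPochFin_div_eq_tsum {q x : ℂ} (hq : q ≠ 0) (hx : x ≠ 0) (N : ℕ) :
    qPochFin q q (2 * N) * (qPochFin x q N * qPochFin (q / x) q N) =
      ∑' j, thetaTerm x q j * truncWeight q N j := by
  have hcauchy := qPochFin_self_mul_qPochFin_eq_sum q (q ^ (-(N : ℤ)) * x) (N + N)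
  have hunshift : q ^ N * (q ^ (-(N : ℤ)) * x) = x := by
    rw [← mul_assoc, ← zpow_natCast, ← zpow_add₀ hq, add_neg_cancel, zpow_zero, one_mul]
  rw [qPochFin_add (q ^ (-(N : ℤ)) * x), hunshift] at hcauchy
  refine mul_left_cancel₀ (pow_ne_zero N (neg_ne_zero.2 hx)) ?_
  calc (-x) ^ N * (qPochFin q q (2 * N) * (qPochFin x q N * qPochFin (q / x) q N))
      = q ^ choose2 (N + 1) * (qPochFin q q (N + N) * (qPochFin (q ^ (-(N : ℤ)) * x) q N *
          qPochFin x q N)) := by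
        rw [two_mul]
        linear_combination -(qPochFin q q (N + N) * qPochFin x q N) * qPochFin_zpow_neg_mul hq hx N
    _ = (-x) ^ N *
          ∑ p ∈ antidiagonal (N + N), thetaTerm x q (p.1 - N) * scaledQBinom q p.1 p.2 := by
        rw [hcauchy, mul_sum, mul_sum]
        refine sum_congr rfl fun p _ => ?_
        linear_combination -scaledQBinom q p.1 p.2 * neg_pow_mul_thetaTerm_sub_natCast hq hx N p.1
    _ = _ := by rw [sum_antidiagonal_eq_tsum_truncWeight]

theorem norm_qPochFin_sub_one_le {q : ℂ} (hq : ‖q‖ < 1) (x : ℂ) (n : ℕ) :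
    ‖qPochFin x q n - 1‖ ≤ Real.exp (‖x‖ / (1 - ‖q‖)) - 1 := by
  have h := Finset.norm_prod_one_add_sub_one_le (range n) fun i => -(q ^ i * x)
  simp only [← sub_eq_add_neg, norm_neg, norm_mul, norm_pow] at h
  refine h.trans (sub_le_sub_right (Real.exp_le_exp.2 ?_) 1)
  calc ∑ i ∈ range n, ‖q‖ ^ i * ‖x‖ = (∑ i ∈ range n, ‖q‖ ^ i) * ‖x‖ := (sum_mul ..).symm
    _ ≤ (1 - ‖q‖)⁻¹ * ‖x‖ := by
      refine mul_le_mul_of_nonneg_right ?_ (norm_nonneg x)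
      have h := geom_sum_Ico_le_of_lt_one (m := 0) (n := n) (norm_nonneg q) hq
      rwa [← range_eq_Ico, pow_zero, one_div] at h
    _ = ‖x‖ / (1 - ‖q‖) := by rw [div_eq_inv_mul]

theorem norm_qPochFin_le {q : ℂ} (hq : ‖q‖ < 1) (x : ℂ) (n : ℕ) :
    ‖qPochFin x q n‖ ≤ Real.exp (‖x‖ / (1 - ‖q‖)) := by
  have := norm_qPochFin_sub_one_le hq x n
  have := norm_le_norm_sub_add (qPochFin x q n) 1
  rw [norm_one] at this
  linarith

theorem tendsto_qPochFin {q : ℂ} (hq : ‖q‖ < 1) (x : ℂ) :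
    Tendsto (qPochFin x q) atTop (𝓝 (qPochInf x q)) := by
  have hs : Summable fun i : ℕ => ‖-(q ^ i * x)‖ := by
    simpa [norm_pow] using (summable_geometric_of_lt_one (norm_nonneg _) hq).mul_right ‖x‖
  have h := (multipliable_one_add_of_summable hs).tendsto_prod_tprod_nat
  simp only [← sub_eq_add_neg] at h
  exact h

theorem tendsto_qPochFin_of_tendsto_zero {q : ℂ} (hq : ‖q‖ < 1) {z : ℕ → ℂ}
    (hz : Tendsto z atTop (𝓝 0)) (n : ℕ → ℕ) :
    Tendsto (fun N => qPochFin (z N) q (n N)) atTop (𝓝 1) := by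
  have hbound : Tendsto (fun N => Real.exp (‖z N‖ / (1 - ‖q‖)) - 1) atTop (𝓝 0) := by
    simpa using ((Real.continuous_exp.tendsto _).comp (hz.norm.div_const (1 - ‖q‖))).sub_const 1
  exact tendsto_iff_norm_sub_tendsto_zero.2
    (squeeze_zero (fun _ => norm_nonneg _) (fun N => norm_qPochFin_sub_one_le hq _ _) hbound)

theorem tendsto_truncWeight {q : ℂ} (hq : ‖q‖ < 1) (j : ℤ) :
    Tendsto (fun N => truncWeight q N j) atTop (𝓝 1) := by
  have hpow : ∀ k : ℤ, Tendsto (fun N : ℕ => q ^ ((N + k).toNat + 1)) atTop (𝓝 0) := fun k =>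
    (tendsto_pow_atTop_nhds_zero_of_norm_lt_one hq).comp
      (tendsto_atTop_atTop.2 fun b => ⟨b + k.natAbs, fun N hN => by omega⟩)
  have hlim := (tendsto_qPochFin_of_tendsto_zero hq (hpow j) fun N => (N - j).toNat).mul
    (tendsto_qPochFin_of_tendsto_zero hq (hpow (-j)) fun N => (N + j).toNat)
  rw [one_mul] at hlim
  refine hlim.congr' ((eventually_ge_atTop j.natAbs).mono fun N hN => ?_)
  dsimp only
  rw [truncWeight, if_pos hN, scaledQBinom, sub_eq_add_neg]

theorem norm_truncWeight_le {q : ℂ} (hq : ‖q‖ < 1) (N : ℕ) (j : ℤ) :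
    ‖truncWeight q N j‖ ≤ Real.exp (‖q‖ / (1 - ‖q‖)) ^ 2 := by
  have hB : ∀ a b : ℕ, ‖qPochFin (q ^ (a + 1)) q b‖ ≤ Real.exp (‖q‖ / (1 - ‖q‖)) := fun a b =>
    (norm_qPochFin_le hq _ b).trans <| Real.exp_le_exp.2 <| by
      gcongr
      rw [norm_pow]
      exact pow_le_of_le_one (norm_nonneg q) hq.le (by omega)
  rw [truncWeight]
  split_ifs
  · rw [scaledQBinom, norm_mul, sq]
    exact mul_le_mul (hB _ _) (hB _ _) (norm_nonneg _) (Real.exp_pos _).le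
  · rw [norm_zero]; positivity

theorem jt_eq_theta {q x : ℂ} (hq0 : q ≠ 0) (hq1 : ‖q‖ < 1) (hx : x ≠ 0) :
    jt x q = theta x q := by
  have hlhs : Tendsto (fun N => qPochFin q q (2 * N) * (qPochFin x q N * qPochFin (q / x) q N))
      atTop (𝓝 (qPochInf q q * (qPochInf x q * qPochInf (q / x) q))) :=
    ((tendsto_qPochFin hq1 q).comp (tendsto_atTop_atTop.2 fun b => ⟨b, fun N _ => by omega⟩)).mul
      ((tendsto_qPochFin hq1 x).mul (tendsto_qPochFin hq1 _))
  have hrhs : Tendsto (fun N => ∑' j, thetaTerm x q j * truncWeight q N j) atTop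
      (𝓝 (theta x q)) := by
    simpa [theta] using tendsto_tsum_of_dominated_convergence
      ((summable_norm_thetaTerm hq0 hq1 hx).mul_right (Real.exp (‖q‖ / (1 - ‖q‖)) ^ 2))
      (fun j => (tendsto_truncWeight hq1 j).const_mul (thetaTerm x q j))
      (Eventually.of_forall fun N j => by
        rw [norm_mul]; gcongr; exact norm_truncWeight_le hq1 N j)
  have := tendsto_nhds_unique hlhs
    (hrhs.congr fun N => (qPochFin_mul_qPochFin_div_eq_tsum hq0 hx N).symm)
  rw [jt, ← this]
  ring

theorem jt_div_self {q : ℂ} (hq : q ≠ 0) (w : ℂ) : jt (q / w) q = jt w q := by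
  rw [jt, jt, div_div_cancel₀ hq]; ring

theorem thetaTerm_mul_thetaTerm_cube {q x : ℂ} (hq : q ≠ 0) (hx : x ≠ 0) (c s r : ℤ) :
    thetaTerm x q (c + 2 * r - 3 * s) * thetaTerm (-x ^ 3) (q ^ 6) (s + r) =
      (-1) ^ c * q ^ choose2 c * x ^ c *
        (thetaTerm (q ^ (6 - 3 * c)) (q ^ 15) s *
          thetaTerm (-(q ^ (1 + 2 * c) * x ^ 5)) (q ^ 10) r) := by
  have hsq (k : ℤ) : (-1 : ℂ) ^ k * (-1) ^ k = 1 := by rw [← mul_zpow]; norm_num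
  have hsign : (-1 : ℂ) ^ (c + 2 * r - 3 * s) = (-1) ^ c * (-1) ^ s := by
    rw [show c + 2 * r - 3 * s = c + s + 2 * (r - 2 * s) by ring, zpow_add₀ (by norm_num),
      zpow_add₀ (by norm_num), zpow_mul]
    norm_num
  have hexp : choose2 (c + 2 * r - 3 * s) + 6 * choose2 (s + r) =
      choose2 c + 15 * choose2 s + (6 - 3 * c) * s + 10 * choose2 r + (1 + 2 * c) * r := by
    linarith [two_mul_choose2 (c + 2 * r - 3 * s), two_mul_choose2 (s + r), two_mul_choose2 c,
      two_mul_choose2 s, two_mul_choose2 r]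
  have hqexp : q ^ choose2 (c + 2 * r - 3 * s) * q ^ (6 * choose2 (s + r)) =
      q ^ choose2 c * q ^ (15 * choose2 s) * q ^ ((6 - 3 * c) * s) * q ^ (10 * choose2 r) *
        q ^ ((1 + 2 * c) * r) := by
    simp only [← zpow_add₀ hq, hexp]
  have hxexp : x ^ (c + 2 * r - 3 * s) * x ^ (3 * (s + r)) = x ^ c * x ^ (5 * r) := by
    rw [← zpow_add₀ hx, ← zpow_add₀ hx]; ring_nf
  have hpow (a : ℂ) (n : ℕ) (k : ℤ) : (a ^ n) ^ k = a ^ (n * k) := by rw [zpow_mul]; norm_cast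
  simp only [thetaTerm, neg_eq_neg_one_mul (x ^ 3), neg_eq_neg_one_mul (q ^ (1 + 2 * c) * x ^ 5),
    mul_zpow, hpow, ← zpow_mul, Nat.cast_ofNat]
  calc _ = (-1) ^ (c + 2 * r - 3 * s) *
        (q ^ choose2 (c + 2 * r - 3 * s) * q ^ (6 * choose2 (s + r))) *
        (x ^ (c + 2 * r - 3 * s) * x ^ (3 * (s + r))) * ((-1) ^ (s + r) * (-1) ^ (s + r)) := by ring
    _ = (-1) ^ c * (-1) ^ s * (q ^ choose2 c * q ^ (15 * choose2 s) * q ^ ((6 - 3 * c) * s) *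
        q ^ (10 * choose2 r) * q ^ ((1 + 2 * c) * r)) * (x ^ c * x ^ (5 * r)) *
        ((-1) ^ r * (-1) ^ r) := by
      rw [hsign, hqexp, hxexp, hsq, hsq]
    _ = _ := by ring

def cubeSplitEquiv : Fin 5 × ℤ × ℤ ≃ ℤ × ℤ where
  toFun p := ((p.1 : ℤ) - 2 + 2 * p.2.2 - 3 * p.2.1, p.2.1 + p.2.2)
  invFun p :=
    (⟨((p.1 + 3 * p.2 + 2) % 5).toNat, by omega⟩, p.2 - (p.1 + 3 * p.2 + 2) / 5,
      (p.1 + 3 * p.2 + 2) / 5)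
  left_inv := by
    rintro ⟨⟨c, hc⟩, s, r⟩
    simp only [Prod.mk.injEq, Fin.mk.injEq]
    omega
  right_inv := by
    rintro ⟨m, n⟩
    simp only [Prod.mk.injEq]
    omega

theorem theta_mul_theta_cube {q x : ℂ} (hq0 : q ≠ 0) (hq1 : ‖q‖ < 1) (hx : x ≠ 0) :
    theta x q * theta (-x ^ 3) (q ^ 6) =
      ∑ c : Fin 5, (-1) ^ ((c : ℤ) - 2) * q ^ choose2 (c - 2) * x ^ ((c : ℤ) - 2) *
        (theta (q ^ (6 - 3 * ((c : ℤ) - 2))) (q ^ 15) *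
          theta (-(q ^ (1 + 2 * ((c : ℤ) - 2)) * x ^ 5)) (q ^ 10)) := by
  have hsummable {w : ℂ} {n : ℕ} (hw : w ≠ 0) (hn : n ≠ 0) :
      Summable fun k => ‖thetaTerm w (q ^ n) k‖ :=
    summable_norm_thetaTerm (pow_ne_zero n hq0) (norm_pow_lt_one hq1 hn) hw
  have hprod := (summable_mul_of_summable_norm (summable_norm_thetaTerm hq0 hq1 hx)
    (hsummable (w := -x ^ 3) (n := 6) (by simpa using hx) (by norm_num))).comp_injective
      cubeSplitEquiv.injective
  rw [theta, theta, tsum_mul_tsum_of_summable_norm (summable_norm_thetaTerm hq0 hq1 hx)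
    (hsummable (by simpa using hx) (by norm_num)), ← cubeSplitEquiv.tsum_eq]
  refine ((hprod.tsum_prod' fun c => hprod.prod_factor c).trans (tsum_fintype _)).trans
    (sum_congr rfl fun c _ => ?_)
  rw [theta, theta, tsum_mul_tsum_of_summable_norm (hsummable (zpow_ne_zero _ hq0) (by norm_num))
    (hsummable (neg_ne_zero.2 (mul_ne_zero (zpow_ne_zero _ hq0) (pow_ne_zero _ hx))) (by norm_num)),
    ← tsum_mul_left]
  exact tsum_congr fun p => thetaTerm_mul_thetaTerm_cube hq0 hx _ p.1 p.2

theorem jt_cube_split (q x : ℂ) (hq0 : 0 < ‖q‖)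
    (hq1 : ‖q‖ < 1) (hx : x ≠ 0) :
    jt x q * jt (-x ^ 3) (q ^ 6) =
      jt (q ^ 3) (q ^ 15) *
        (q ^ 3 * x ^ (-2 : ℤ) * jt (-(q ^ (-3 : ℤ) * x ^ 5)) (q ^ 10) -
          x * jt (-(q ^ 3 * x ^ 5)) (q ^ 10)) +
      jt (q ^ 6) (q ^ 15) *
        (jt (-(q * x ^ 5)) (q ^ 10) -
          q * x⁻¹ * jt (-(q ^ (-1 : ℤ) * x ^ 5)) (q ^ 10)) := by
  have hq : q ≠ 0 := norm_pos_iff.1 hq0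
  have htheta {n : ℕ} {w : ℂ} (hn : n ≠ 0) (hw : w ≠ 0) : theta w (q ^ n) = jt w (q ^ n) :=
    (jt_eq_theta (pow_ne_zero n hq) (norm_pow_lt_one hq1 hn) hw).symm
  have hsymm {a b : ℕ} (hab : a + b = 15) : jt (q ^ a) (q ^ 15) = jt (q ^ b) (q ^ 15) := by
    rw [← jt_div_self (pow_ne_zero 15 hq) (q ^ b), ← hab, pow_add,
      mul_div_cancel_right₀ _ (pow_ne_zero b hq)]
  rw [jt_eq_theta hq hq1 hx, ← htheta (by norm_num) (by simpa using hx),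
    theta_mul_theta_cube hq hq1 hx, Fin.sum_univ_five]
  -- the five residue classes `c - 2 = -2, …, 2`; the class `2` carries the factor `θ(1; q¹⁵) = 0`
  norm_num [choose2, theta_one]
  simp (disch := simp [hq, hx]) only [htheta]
  rw [hsymm (a := 12) (b := 3) rfl, hsymm (a := 9) (b := 6) rfl]
  ring
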